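/- arXiv:2304.10698 — 5 statements merged into one kernel-verified Lean document; each statement's English description precedes it below -/
import Mathlib

section
/- The function c((u_1,v_1),...,(u_n,v_n)) = c1(u_1,...,u_n) · ∏_{j=1}^n c2(u_j, v_j) · c3(C_{2|1}(v_1|u_1), ..., C_{2|1}(v_n|u_n)) integrates to 1 over the unit cube [0,1]^{2n}, hence defines a probability density. -/
open MeasureTheory Set
open scoped ENNReal

lemma lintegral_pi_fin_prod {n : ℕ} (μ : Measure ℝ) [SigmaFinite μ] (f : Fin n → ℝ → ℝ≥0∞)
    (hf : ∀ j, Measurable (f j)) :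
    ∫⁻ x : Fin n → ℝ, ∏ j, f j (x j) ∂(Measure.pi fun _ => μ) = ∏ j, ∫⁻ y, f j y ∂μ := by
  induction n with
  | zero => simp
  | succ n ih =>
    rw [((measurePreserving_piFinSuccAbove (fun _ : Fin (n+1) => μ) 0).symm).lintegral_map_equiv
      (fun x : Fin (n+1) → ℝ => ∏ j, f j (x j)) _]
    have hmeas : Measurable fun z : Fin n → ℝ => ∏ j, f (Fin.succ j) (z j) :=
      Finset.measurable_prod _ fun j _ => (hf j.succ).comp (measurable_pi_apply j)
    simp only [MeasurableEquiv.piFinSuccAbove_symm_apply, Fin.insertNthEquiv,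
      Fin.prod_univ_succ, Fin.insertNth_zero, Equiv.coe_fn_mk, Fin.cons_succ,
      Fin.zero_succAbove, Fin.cons_zero, cast_eq]
    rw [lintegral_prod_mul (hf 0).aemeasurable hmeas.aemeasurable,
      ih (fun j => f j.succ) (fun j => hf j.succ)]

lemma lintegral_image_1d {s : Set ℝ} {f f' : ℝ → ℝ} (hs : MeasurableSet s)
    (hf' : ∀ x ∈ s, HasDerivWithinAt f (f' x) s x) (hf : InjOn f s) (g : ℝ → ℝ≥0∞) :
    ∫⁻ x in f '' s, g x = ∫⁻ x in s, ENNReal.ofReal |f' x| * g (f x) := by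
  simpa only [ContinuousLinearMap.det_toSpanSingleton] using
    lintegral_image_eq_lintegral_abs_det_fderiv_mul volume hs
      (fun x hx => (hf' x hx).hasFDerivWithinAt) hf g

lemma map_cdf {c2 C21 : ℝ → ℝ → ℝ} (a : ℝ)
    (hC21measa : Measurable (C21 a))
    (hc2pos : ∀ v ∈ Icc (0:ℝ) 1, 0 ≤ c2 a v)
    (hderiv : ∀ v ∈ Icc (0:ℝ) 1, HasDerivAt (C21 a) (c2 a v) v)
    (hmono : StrictMonoOn (C21 a) (Icc (0:ℝ) 1))
    (hcont : ContinuousOn (C21 a) (Icc (0:ℝ) 1))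
    (h0 : C21 a 0 = 0) (h1 : C21 a 1 = 1) (A : Set ℝ) (hA : MeasurableSet A) :
    ∫⁻ y in C21 a ⁻¹' A, ENNReal.ofReal (c2 a y) ∂(volume.restrict (Icc 0 1))
      = volume.restrict (Icc 0 1) A := by
  have himg : C21 a '' Icc 0 1 = Icc 0 1 := by
    refine subset_antisymm ?_ ?_
    · rintro _ ⟨x, hx, rfl⟩
      exact ⟨h0 ▸ (hmono.monotoneOn (left_mem_Icc.2 zero_le_one) hx hx.1),
        h1 ▸ (hmono.monotoneOn hx (right_mem_Icc.2 zero_le_one) hx.2)⟩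
    · have := intermediate_value_Icc zero_le_one hcont
      rwa [h0, h1] at this
  have key := lintegral_image_1d measurableSet_Icc
    (fun x hx => (hderiv x hx).hasDerivWithinAt) hmono.injOn (A.indicator 1)
  rw [himg] at key
  have hrw : ∀ x ∈ Icc (0:ℝ) 1, ENNReal.ofReal |c2 a x| * A.indicator 1 (C21 a x)
      = (C21 a ⁻¹' A).indicator (fun y => ENNReal.ofReal (c2 a y)) x := by
    intro x hx
    rw [abs_of_nonneg (hc2pos x hx)]
    by_cases hxA : C21 a x ∈ A <;> simp [indicator, hxA]
  rw [setLIntegral_congr_fun measurableSet_Icc hrw,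
    lintegral_indicator (hC21measa hA)] at key
  rw [Measure.restrict_restrict (hC21measa hA)] at key ⊢
  rw [← key, lintegral_indicator_one hA]

lemma restrict_cube (n : ℕ) :
    volume.restrict (univ.pi fun _ : Fin n => Icc (0:ℝ) 1)
      = Measure.pi fun _ => volume.restrict (Icc 0 1) := by
  refine (Measure.pi_eq fun s hs => ?_).symm
  rw [Measure.restrict_apply (MeasurableSet.univ_pi hs)]
  have : (univ.pi s) ∩ (univ.pi fun _ : Fin n => Icc (0:ℝ) 1)
      = univ.pi fun j => s j ∩ Icc (0:ℝ) 1 := by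
    ext v; simp [Set.mem_pi, Pi.le_def, forall_and]
  rw [this, volume_pi, Measure.pi_pi]
  exact Finset.prod_congr rfl fun j _ => (Measure.restrict_apply (hs j)).symm

lemma map_T {n : ℕ} {c2 C21 : ℝ → ℝ → ℝ} (u : Fin n → ℝ) (hu : ∀ j, u j ∈ Icc (0:ℝ) 1)
    (hc2meas : Measurable fun p : ℝ × ℝ => c2 p.1 p.2)
    (hC21meas : Measurable fun p : ℝ × ℝ => C21 p.1 p.2)
    (hc2pos : ∀ a ∈ Icc (0:ℝ) 1, ∀ v ∈ Icc (0:ℝ) 1, 0 ≤ c2 a v)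
    (hderiv : ∀ a ∈ Icc (0:ℝ) 1, ∀ v ∈ Icc (0:ℝ) 1, HasDerivAt (fun v' => C21 a v') (c2 a v) v)
    (hmono : ∀ a ∈ Icc (0:ℝ) 1, StrictMonoOn (C21 a) (Icc (0:ℝ) 1))
    (hcont : ∀ a ∈ Icc (0:ℝ) 1, ContinuousOn (C21 a) (Icc (0:ℝ) 1))
    (h0 : ∀ a ∈ Icc (0:ℝ) 1, C21 a 0 = 0) (h1 : ∀ a ∈ Icc (0:ℝ) 1, C21 a 1 = 1) :
    Measure.map (fun (v : Fin n → ℝ) (j : Fin n) => C21 (u j) (v j))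
      ((Measure.pi fun _ => volume.restrict (Icc 0 1)).withDensity
        fun v => ∏ j, ENNReal.ofReal (c2 (u j) (v j)))
      = Measure.pi fun _ => volume.restrict (Icc 0 1) := by
  have hC21a : ∀ j : Fin n, Measurable (C21 (u j)) := fun j =>
    hC21meas.comp (measurable_const.prodMk measurable_id)
  have hT : Measurable (fun (v : Fin n → ℝ) (j : Fin n) => C21 (u j) (v j)) :=
    measurable_pi_lambda _ fun j =>
      hC21meas.comp ((measurable_const.prodMk (measurable_pi_apply j)))
  have hD : Measurable (fun v : Fin n → ℝ => ∏ j, ENNReal.ofReal (c2 (u j) (v j))) :=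
    Finset.measurable_prod _ fun j _ => ENNReal.measurable_ofReal.comp
      (hc2meas.comp (measurable_const.prodMk (measurable_pi_apply j)))
  refine (Measure.pi_eq fun s hs => ?_).symm
  have ht : ∀ j, MeasurableSet (C21 (u j) ⁻¹' s j) := fun j => hC21a j (hs j)
  rw [Measure.map_apply hT (MeasurableSet.univ_pi hs)]
  have hpre : (fun (v : Fin n → ℝ) (j : Fin n) => C21 (u j) (v j)) ⁻¹' (univ.pi s)
      = univ.pi fun j => C21 (u j) ⁻¹' s j := by
    ext v; simp [Set.mem_pi]
  rw [hpre, withDensity_apply _ (MeasurableSet.univ_pi ht),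
    ← lintegral_indicator (MeasurableSet.univ_pi ht)]
  have hind : ∀ v : Fin n → ℝ,
      (univ.pi fun j => C21 (u j) ⁻¹' s j).indicator
        (fun v => ∏ j, ENNReal.ofReal (c2 (u j) (v j))) v
      = ∏ j, ((C21 (u j) ⁻¹' s j).indicator (fun y => ENNReal.ofReal (c2 (u j) y))) (v j) := by
    intro v
    by_cases hv : v ∈ univ.pi fun j => C21 (u j) ⁻¹' s j
    · rw [indicator_of_mem hv]
      refine Finset.prod_congr rfl fun j _ => ?_
      rw [indicator_of_mem (hv j (Set.mem_univ j))]
    · rw [indicator_of_notMem hv]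
      rw [Set.mem_pi] at hv
      push_neg at hv
      obtain ⟨j, -, hj⟩ := hv
      exact (Finset.prod_eq_zero (Finset.mem_univ j) (indicator_of_notMem hj _)).symm
  have hfj : ∀ j : Fin n,
      Measurable ((C21 (u j) ⁻¹' s j).indicator fun y => ENNReal.ofReal (c2 (u j) y)) :=
    fun j => (ENNReal.measurable_ofReal.comp
      (hc2meas.comp (measurable_const.prodMk measurable_id))).indicator (ht j)
  rw [lintegral_congr hind, lintegral_pi_fin_prod _ _ hfj]
  refine Finset.prod_congr rfl fun j _ => ?_
  rw [lintegral_indicator (ht j)]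
  exact map_cdf (u j) (hC21a j) (hc2pos _ (hu j)) (hderiv _ (hu j)) (hmono _ (hu j))
    (hcont _ (hu j)) (h0 _ (hu j)) (h1 _ (hu j)) (s j) (hs j)


/-- The function
`c((u,v)) = c1(u) · ∏ c2(u_j, v_j) · c3(C_{2|1}(v_1|u_1), ..., C_{2|1}(v_n|u_n))`
integrates to 1 over `[0,1]^{2n}`, hence defines a probability density. -/
theorem statement4
    (n : ℕ)
    (c1 c3 : (Fin n → ℝ) → ℝ) (c2 C21 : ℝ → ℝ → ℝ)
    (cube : Set (Fin n → ℝ)) (hcube : cube = Set.univ.pi fun _ => Icc (0:ℝ) 1)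
    -- c1 and c3 are copula densities on [0,1]^n
    (hc1meas : Measurable c1) (hc3meas : Measurable c3)
    (hc1pos : ∀ u ∈ cube, 0 ≤ c1 u) (hc3pos : ∀ w ∈ cube, 0 ≤ c3 w)
    (hc1int : ∫ u in cube, c1 u = 1) (hc3int : ∫ w in cube, c3 w = 1)
    (hc1marg : ∀ j : Fin n, ∀ s ∈ Icc (0:ℝ) 1,
      ∫ u in cube, (if u j ≤ s then c1 u else 0) = s)
    (hc3marg : ∀ j : Fin n, ∀ s ∈ Icc (0:ℝ) 1,
      ∫ w in cube, (if w j ≤ s then c3 w else 0) = s)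
    -- c2 is a bivariate copula density with conditional cdf C21(u, ·) = ∂C2/∂u
    (hc2meas : Measurable fun p : ℝ × ℝ => c2 p.1 p.2)
    (hC21meas : Measurable fun p : ℝ × ℝ => C21 p.1 p.2)
    (hc2pos : ∀ u ∈ Icc (0:ℝ) 1, ∀ v ∈ Icc (0:ℝ) 1, 0 ≤ c2 u v)
    (hderiv : ∀ u ∈ Icc (0:ℝ) 1, ∀ v ∈ Icc (0:ℝ) 1,
      HasDerivAt (fun v' => C21 u v') (c2 u v) v)
    -- for each fixed u, C21 u is a continuous strictly increasing bijection of [0,1]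
    (hmono : ∀ u ∈ Icc (0:ℝ) 1, StrictMonoOn (C21 u) (Icc (0:ℝ) 1))
    (hcont : ∀ u ∈ Icc (0:ℝ) 1, ContinuousOn (C21 u) (Icc (0:ℝ) 1))
    (h0 : ∀ u ∈ Icc (0:ℝ) 1, C21 u 0 = 0) (h1 : ∀ u ∈ Icc (0:ℝ) 1, C21 u 1 = 1) :
    ∫ p in cube ×ˢ cube,
        c1 p.1 * (∏ j, c2 (p.1 j) (p.2 j)) * c3 (fun j => C21 (p.1 j) (p.2 j))
      = 1 := by
  have hcubeMeas : MeasurableSet cube := by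
    rw [hcube]; exact MeasurableSet.univ_pi fun _ => measurableSet_Icc
  have hmem : ∀ {x : Fin n → ℝ}, x ∈ cube ↔ ∀ j, x j ∈ Icc (0:ℝ) 1 := by
    intro x; rw [hcube]; exact Set.mem_univ_pi
  -- membership of the transformed point
  have hTmem : ∀ u ∈ cube, ∀ v ∈ cube, (fun j => C21 (u j) (v j)) ∈ cube := by
    intro u hu v hv
    rw [hmem]
    intro j
    have ha := hmem.mp hu j
    have hv' := hmem.mp hv j
    constructor
    · rw [← h0 _ ha]
      exact (hmono _ ha).monotoneOn (left_mem_Icc.2 zero_le_one) hv' hv'.1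
    · rw [← h1 _ ha]
      exact (hmono _ ha).monotoneOn hv' (right_mem_Icc.2 zero_le_one) hv'.2
  -- measurability of pieces
  have hmeasT : Measurable fun p : (Fin n → ℝ) × (Fin n → ℝ) =>
      (fun j => C21 (p.1 j) (p.2 j)) :=
    measurable_pi_lambda _ fun j => by
      exact hC21meas.comp (Measurable.prodMk
        (by exact (measurable_pi_apply j).comp measurable_fst)
        (by exact (measurable_pi_apply j).comp measurable_snd))
  have hmeasP : Measurable fun p : (Fin n → ℝ) × (Fin n → ℝ) =>
      ∏ j, c2 (p.1 j) (p.2 j) :=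
    Finset.measurable_prod _ fun j _ => by
      exact hc2meas.comp (Measurable.prodMk
        (by exact (measurable_pi_apply j).comp measurable_fst)
        (by exact (measurable_pi_apply j).comp measurable_snd))
  have hfmeas : Measurable fun p : (Fin n → ℝ) × (Fin n → ℝ) =>
      c1 p.1 * (∏ j, c2 (p.1 j) (p.2 j)) * c3 (fun j => C21 (p.1 j) (p.2 j)) :=
    ((hc1meas.comp measurable_fst).mul hmeasP).mul (hc3meas.comp hmeasT)
  -- nonnegativity on the cube
  have hfpos : ∀ p ∈ cube ×ˢ cube,
      0 ≤ c1 p.1 * (∏ j, c2 (p.1 j) (p.2 j)) * c3 (fun j => C21 (p.1 j) (p.2 j)) := by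
    intro p hp
    refine mul_nonneg (mul_nonneg (hc1pos _ hp.1) ?_) (hc3pos _ (hTmem _ hp.1 _ hp.2))
    exact Finset.prod_nonneg fun j _ => hc2pos _ (hmem.mp hp.1 j) _ (hmem.mp hp.2 j)
  -- a bochner integral 1 gives a lintegral 1
  have key : ∀ g : (Fin n → ℝ) → ℝ, Measurable g → (∀ w ∈ cube, 0 ≤ g w) →
      (∫ w in cube, g w = 1) → ∫⁻ w in cube, ENNReal.ofReal (g w) = 1 := by
    intro g hg hpos hint
    rw [integral_eq_lintegral_of_nonneg_ae
      ((ae_restrict_iff' hcubeMeas).mpr (ae_of_all _ hpos))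
      hg.aestronglyMeasurable] at hint
    exact (ENNReal.toReal_eq_one_iff _).mp hint
  have hc3lint := key c3 hc3meas hc3pos hc3int
  have hc1lint := key c1 hc1meas hc1pos hc1int
  -- inner integral computation
  have hinner : ∀ u ∈ cube,
      (∫⁻ v in cube, ENNReal.ofReal
        (c1 u * (∏ j, c2 (u j) (v j)) * c3 (fun j => C21 (u j) (v j))))
      = ENNReal.ofReal (c1 u) := by
    intro u hu
    have hu' : ∀ j, u j ∈ Icc (0:ℝ) 1 := hmem.mp hu
    have hD : Measurable (fun v : Fin n → ℝ => ∏ j, ENNReal.ofReal (c2 (u j) (v j))) :=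
      Finset.measurable_prod _ fun j _ => ENNReal.measurable_ofReal.comp
        (hc2meas.comp (measurable_const.prodMk (measurable_pi_apply j)))
    have hT : Measurable (fun (v : Fin n → ℝ) (j : Fin n) => C21 (u j) (v j)) :=
      measurable_pi_lambda _ fun j =>
        hC21meas.comp (measurable_const.prodMk (measurable_pi_apply j))
    have hG : Measurable fun w : Fin n → ℝ => ENNReal.ofReal (c3 w) :=
      hc3meas.ennreal_ofReal
    have step1 : (∫⁻ v in cube, ENNReal.ofReal
        (c1 u * (∏ j, c2 (u j) (v j)) * c3 (fun j => C21 (u j) (v j))))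
        = ∫⁻ v in cube, ENNReal.ofReal (c1 u) *
            ((∏ j, ENNReal.ofReal (c2 (u j) (v j))) *
              ENNReal.ofReal (c3 (fun j => C21 (u j) (v j)))) := by
      refine setLIntegral_congr_fun hcubeMeas fun v hv => ?_
      have hv' : ∀ j, v j ∈ Icc (0:ℝ) 1 := hmem.mp hv
      have hprodpos : (0:ℝ) ≤ ∏ j, c2 (u j) (v j) :=
        Finset.prod_nonneg fun j _ => hc2pos _ (hu' j) _ (hv' j)
      rw [mul_assoc, ENNReal.ofReal_mul (hc1pos _ hu), ENNReal.ofReal_mul hprodpos,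
        ENNReal.ofReal_prod_of_nonneg fun j _ => hc2pos _ (hu' j) _ (hv' j)]
    have hDG : Measurable fun v : Fin n → ℝ =>
        (∏ j, ENNReal.ofReal (c2 (u j) (v j))) *
          ENNReal.ofReal (c3 fun j => C21 (u j) (v j)) := by
      exact hD.mul (hG.comp hT)
    rw [step1, lintegral_const_mul _ hDG]
    have step2 : (∫⁻ v in cube, (∏ j, ENNReal.ofReal (c2 (u j) (v j))) *
          ENNReal.ofReal (c3 (fun j => C21 (u j) (v j))))
        = ∫⁻ w in cube, ENNReal.ofReal (c3 w) := by
      rw [hcube, restrict_cube n]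
      calc ∫⁻ v, (∏ j, ENNReal.ofReal (c2 (u j) (v j))) *
              ENNReal.ofReal (c3 (fun j => C21 (u j) (v j)))
            ∂(Measure.pi fun _ => volume.restrict (Icc 0 1))
          = ∫⁻ v, ((fun v : Fin n → ℝ => ∏ j, ENNReal.ofReal (c2 (u j) (v j))) *
              ((fun w => ENNReal.ofReal (c3 w)) ∘ fun (v : Fin n → ℝ) j => C21 (u j) (v j))) v
            ∂(Measure.pi fun _ => volume.restrict (Icc 0 1)) := rfl
        _ = ∫⁻ v, ((fun w => ENNReal.ofReal (c3 w)) ∘ fun (v : Fin n → ℝ) j => C21 (u j) (v j)) v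
            ∂((Measure.pi fun _ => volume.restrict (Icc 0 1)).withDensity
              fun v => ∏ j, ENNReal.ofReal (c2 (u j) (v j))) :=
            (lintegral_withDensity_eq_lintegral_mul _ hD (hG.comp hT)).symm
        _ = ∫⁻ w, ENNReal.ofReal (c3 w)
            ∂(Measure.map (fun (v : Fin n → ℝ) (j : Fin n) => C21 (u j) (v j))
              ((Measure.pi fun _ => volume.restrict (Icc 0 1)).withDensity
                fun v => ∏ j, ENNReal.ofReal (c2 (u j) (v j)))) :=
            (lintegral_map hG hT).symm
        _ = ∫⁻ w, ENNReal.ofReal (c3 w) ∂(Measure.pi fun _ => volume.restrict (Icc 0 1)) := by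
            rw [map_T u hu' hc2meas hC21meas hc2pos hderiv hmono hcont h0 h1]
    rw [step2, hc3lint, mul_one]
  -- main computation
  rw [integral_eq_lintegral_of_nonneg_ae
    ((ae_restrict_iff' (hcubeMeas.prod hcubeMeas)).mpr (ae_of_all _ hfpos))
    hfmeas.aestronglyMeasurable]
  have hL : (∫⁻ p in cube ×ˢ cube, ENNReal.ofReal
      (c1 p.1 * (∏ j, c2 (p.1 j) (p.2 j)) * c3 (fun j => C21 (p.1 j) (p.2 j)))) = 1 := by
    rw [show (volume : Measure ((Fin n → ℝ) × (Fin n → ℝ))) = Measure.prod volume volume from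
      Measure.volume_eq_prod _ _, ← Measure.prod_restrict]
    rw [lintegral_prod _ hfmeas.ennreal_ofReal.aemeasurable]
    calc ∫⁻ u in cube, ∫⁻ v in cube, ENNReal.ofReal
          (c1 u * (∏ j, c2 (u j) (v j)) * c3 (fun j => C21 (u j) (v j)))
        = ∫⁻ u in cube, ENNReal.ofReal (c1 u) :=
          setLIntegral_congr_fun hcubeMeas hinner
      _ = 1 := hc1lint
  rw [hL, ENNReal.toReal_one]
end

section
/- Under the 2-exchangeable copula density, integrating out v_n yields c1(u_1,...,u_n) · ∏_{j=1}^{n-1} c2(u_j,v_j) · c3^{(n-1)}(C_{2|1}(v_1|u_1),...,C_{2|1}(v_{n-1}|u_{n-1})), where c3^{(n-1)} is the (n−1)-dimensional margin of c3. That is, the family is closed under marginalization. -/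
open MeasureTheory Set Filter Topology

lemma aux_deriv_nonneg {f f' : ℝ → ℝ}
    (hmono : StrictMonoOn f (Icc (0:ℝ) 1))
    (hderiv : ∀ x ∈ Icc (0:ℝ) 1, HasDerivAt f (f' x) x)
    {x : ℝ} (hx : x ∈ Icc (0:ℝ) 1) : 0 ≤ f' x := by
  have hdw : HasDerivWithinAt f (f' x) (Icc (0:ℝ) 1) x :=
    (hderiv x hx).hasDerivWithinAt
  rw [hasDerivWithinAt_iff_tendsto_slope] at hdw
  have hne : (𝓝[Icc (0:ℝ) 1 \ {x}] x).NeBot := by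
    rcases lt_or_eq_of_le hx.2 with h | h
    · have hsub : Ioc x 1 ⊆ Icc (0:ℝ) 1 \ {x} := by
        intro y hy
        exact ⟨⟨le_trans hx.1 hy.1.le, hy.2⟩, fun hy' => absurd (hy' ▸ hy.1) (lt_irrefl _)⟩
      exact (left_nhdsWithin_Ioc_neBot h).mono (nhdsWithin_mono _ hsub)
    · have h0 : (0:ℝ) < x := h ▸ one_pos
      have hsub : Ico 0 x ⊆ Icc (0:ℝ) 1 \ {x} := by
        intro y hy
        exact ⟨⟨hy.1, hy.2.le.trans hx.2⟩, fun hy' => absurd (hy' ▸ hy.2) (lt_irrefl _)⟩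
      exact (right_nhdsWithin_Ico_neBot h0).mono (nhdsWithin_mono _ hsub)
  refine ge_of_tendsto hdw ?_
  filter_upwards [eventually_mem_nhdsWithin] with y hy
  rw [slope_def_field]
  rcases lt_or_gt_of_ne (fun hxy : y = x => hy.2 hxy) with hlt | hgt
  · rw [div_nonneg_iff]
    right
    constructor
    · exact sub_nonpos.2 (hmono.monotoneOn hy.1 hx hlt.le)
    · exact sub_nonpos.2 hlt.le
  · refine div_nonneg (sub_nonneg.2 (hmono.monotoneOn hx hy.1 hgt.le)) (sub_nonneg.2 hgt.le)

/-- Under the 2-exchangeable copula density, integrating out the last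
variable `v_n` yields
`c1(u) ∏_{j<n} c2(u_j,v_j) c3^{(n-1)}(C_{2|1}(v_1|u_1),...,C_{2|1}(v_{n-1}|u_{n-1}))`,
where `c3^{(n-1)}` is the `(n−1)`-dimensional margin of `c3`: the family is closed under
marginalization.  (Here the cluster size is `n+1`.) -/
theorem statement6
    (n : ℕ)
    (c1 c3 : (Fin (n + 1) → ℝ) → ℝ) (c2 C21 : ℝ → ℝ → ℝ)
    (hc3meas : Measurable c3)
    (hc3pos : ∀ w, 0 ≤ c3 w)
    -- C21 u is the conditional cdf: its derivative in v is c2 u v, and it is a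
    -- strictly increasing bijection of [0,1] for each fixed u in [0,1]
    (hderiv : ∀ u ∈ Icc (0:ℝ) 1, ∀ v ∈ Icc (0:ℝ) 1,
      HasDerivAt (fun v' => C21 u v') (c2 u v) v)
    (hmono : ∀ u ∈ Icc (0:ℝ) 1, StrictMonoOn (C21 u) (Icc (0:ℝ) 1))
    (h0 : ∀ u ∈ Icc (0:ℝ) 1, C21 u 0 = 0) (h1 : ∀ u ∈ Icc (0:ℝ) 1, C21 u 1 = 1)
    -- the (n)-dimensional margin of c3
    (c3marg : (Fin n → ℝ) → ℝ)
    (hc3marg : ∀ w : Fin n → ℝ, c3marg w = ∫ wn in Icc (0:ℝ) 1, c3 (Fin.snoc w wn : Fin (n + 1) → ℝ)) :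
    ∀ (u : Fin (n + 1) → ℝ), (∀ j, u j ∈ Icc (0:ℝ) 1) →
    ∀ (v : Fin n → ℝ), (∀ j, v j ∈ Icc (0:ℝ) 1) →
      (∫ vn in Icc (0:ℝ) 1,
        c1 u * (∏ j, c2 (u j) ((Fin.snoc v vn : Fin (n + 1) → ℝ) j))
          * c3 (fun j => C21 (u j) ((Fin.snoc v vn : Fin (n + 1) → ℝ) j)))
      = c1 u * (∏ j : Fin n, c2 (u j.castSucc) (v j))
          * c3marg (fun j : Fin n => C21 (u j.castSucc) (v j)) := by
  intro u hu v hv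
  set uN := u (Fin.last n) with huN
  have huNmem : uN ∈ Icc (0:ℝ) 1 := hu _
  set f : ℝ → ℝ := C21 uN with hf
  set w : Fin n → ℝ := fun j => C21 (u j.castSucc) (v j) with hwdef
  have hsnoc : ∀ vn : ℝ, (fun j => C21 (u j) ((Fin.snoc v vn : Fin (n+1) → ℝ) j))
      = Fin.snoc w (f vn) := by
    intro vn; funext j
    refine Fin.lastCases ?_ ?_ j
    · simp [hwdef, hf, huN]
    · intro i; simp [hwdef]
  have hprod : ∀ vn : ℝ, (∏ j, c2 (u j) ((Fin.snoc v vn : Fin (n+1) → ℝ) j))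
      = (∏ j : Fin n, c2 (u j.castSucc) (v j)) * c2 uN vn := by
    intro vn
    rw [Fin.prod_univ_castSucc]
    simp [huN]
  have hmonoN : StrictMonoOn f (Icc (0:ℝ) 1) := hmono uN huNmem
  have hderivN : ∀ x ∈ Icc (0:ℝ) 1, HasDerivAt f (c2 uN x) x := fun x hx =>
    hderiv uN huNmem x hx
  have hcont : ContinuousOn f (Icc (0:ℝ) 1) := fun x hx =>
    (hderivN x hx).continuousAt.continuousWithinAt
  have hinj : InjOn f (Icc (0:ℝ) 1) := hmonoN.injOn
  have himg : f '' Icc (0:ℝ) 1 = Icc (0:ℝ) 1 := by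
    apply Subset.antisymm
    · rintro y ⟨x, hx, rfl⟩
      constructor
      · have h0' : f 0 = 0 := h0 uN huNmem
        rw [← h0']
        exact hmonoN.monotoneOn (left_mem_Icc.2 one_pos.le) hx hx.1
      · have h1' : f 1 = 1 := h1 uN huNmem
        rw [← h1']
        exact hmonoN.monotoneOn hx (right_mem_Icc.2 one_pos.le) hx.2
    · have := intermediate_value_Icc (one_pos.le : (0:ℝ) ≤ 1) hcont
      have h0' : f 0 = 0 := h0 uN huNmem
      have h1' : f 1 = 1 := h1 uN huNmem
      rwa [h0', h1'] at this
  -- change of variables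
  have key : (∫ x in Icc (0:ℝ) 1, c3 (Fin.snoc w x : Fin (n+1) → ℝ))
      = ∫ x in Icc (0:ℝ) 1, c2 uN x * c3 (Fin.snoc w (f x) : Fin (n+1) → ℝ) := by
    have := integral_image_eq_integral_abs_deriv_smul (f' := fun x => c2 uN x)
      measurableSet_Icc (fun x hx => (hderivN x hx).hasDerivWithinAt) hinj
      (fun x => c3 (Fin.snoc w x : Fin (n+1) → ℝ))
    rw [himg] at this
    rw [this]
    refine setIntegral_congr_fun measurableSet_Icc (fun x hx => ?_)
    have : |c2 uN x| = c2 uN x := abs_of_nonneg (aux_deriv_nonneg hmonoN hderivN hx)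
    simp [this]
  set K : ℝ := c1 u * ∏ j : Fin n, c2 (u j.castSucc) (v j) with hK
  calc (∫ vn in Icc (0:ℝ) 1,
        c1 u * (∏ j, c2 (u j) ((Fin.snoc v vn : Fin (n+1) → ℝ) j))
          * c3 (fun j => C21 (u j) ((Fin.snoc v vn : Fin (n+1) → ℝ) j)))
      = ∫ vn in Icc (0:ℝ) 1,
          K * (c2 uN vn * c3 (Fin.snoc w (f vn) : Fin (n+1) → ℝ)) := by
        refine setIntegral_congr_fun measurableSet_Icc (fun vn _ => ?_)
        rw [hprod vn, hsnoc vn, hK]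
        ring
    _ = K * ∫ vn in Icc (0:ℝ) 1, c2 uN vn * c3 (Fin.snoc w (f vn) : Fin (n+1) → ℝ) :=
        integral_const_mul K _
    _ = K * c3marg w := by rw [hc3marg w, key]
    _ = c1 u * (∏ j : Fin n, c2 (u j.castSucc) (v j))
          * c3marg (fun j : Fin n => C21 (u j.castSucc) (v j)) := by
        rw [hK]
end

section
/- The 4×4 matrix with 1's on the diagonal and off-diagonal entries ρ_1, ρ_2, ρ_1ρ_2, ρ_1ρ_2, ρ_2, ρ_1ρ_2² + ρ_3(1−ρ_2²) (as in the correlation matrix (1, ρ_1, ρ_2, ρ_1ρ_2; ρ_1, 1, ρ_1ρ_2, ρ_2; ρ_2, ρ_1ρ_2, 1, ρ_1ρ_2²+ρ_3(1−ρ_2²); ρ_1ρ_2, ρ_2, ρ_1ρ_2²+ρ_3(1−ρ_2²), 1)) is positive semidefinite whenever ρ_1 ∈ [−1,1], ρ_2 ∈ [−1,1], and ρ_3 ∈ [−1,1] with the exchangeable constraint ρ_3 ≥ −1 (in particular for ρ_1, ρ_3 ∈ [0,1)). -/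
/-- The 4×4 correlation matrix
`(1, ρ₁, ρ₂, ρ₁ρ₂; ρ₁, 1, ρ₁ρ₂, ρ₂; ρ₂, ρ₁ρ₂, 1, r; ρ₁ρ₂, ρ₂, r, 1)` with
`r = ρ₁ρ₂² + ρ₃(1−ρ₂²)` is positive semidefinite for `ρ₁ ∈ [0,1]`, `ρ₂ ∈ [−1,1]`,
`ρ₃ ∈ [0,1]`. -/
theorem statement11
    (ρ₁ ρ₂ ρ₃ : ℝ) (hρ₁ : ρ₁ ∈ Set.Icc (0 : ℝ) 1) (hρ₂ : ρ₂ ∈ Set.Icc (-1 : ℝ) 1)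
    (hρ₃ : ρ₃ ∈ Set.Icc (0 : ℝ) 1) :
    (!![1, ρ₁, ρ₂, ρ₁ * ρ₂;
        ρ₁, 1, ρ₁ * ρ₂, ρ₂;
        ρ₂, ρ₁ * ρ₂, 1, ρ₁ * ρ₂ ^ 2 + ρ₃ * (1 - ρ₂ ^ 2);
        ρ₁ * ρ₂, ρ₂, ρ₁ * ρ₂ ^ 2 + ρ₃ * (1 - ρ₂ ^ 2), 1] :
      Matrix (Fin 4) (Fin 4) ℝ).PosSemidef := by
  obtain ⟨h1, h1'⟩ := hρ₁
  obtain ⟨h2, h2'⟩ := hρ₂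
  obtain ⟨h3, h3'⟩ := hρ₃
  constructor
  · ext i j
    fin_cases i <;> fin_cases j <;>
      simp [Matrix.conjTranspose, Matrix.transpose]
  · intro x
    set a := x 0; set b := x 1; set c := x 2; set d := x 3
    have h2sq : ρ₂ ^ 2 ≤ 1 := by nlinarith
    have e1 : (0:ℝ) ≤ (1 - ρ₁) * ((a + ρ₂ * c) ^ 2 + (b + ρ₂ * d) ^ 2)
        + ρ₁ * ((a + ρ₂ * c) + (b + ρ₂ * d)) ^ 2 := by
      have := mul_nonneg (by linarith : (0:ℝ) ≤ 1 - ρ₁)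
        (by positivity : (0:ℝ) ≤ (a + ρ₂ * c) ^ 2 + (b + ρ₂ * d) ^ 2)
      have := mul_nonneg h1 (sq_nonneg ((a + ρ₂ * c) + (b + ρ₂ * d)))
      linarith
    have e2 : (0:ℝ) ≤ (1 - ρ₂ ^ 2) * ((1 - ρ₃) * (c ^ 2 + d ^ 2) + ρ₃ * (c + d) ^ 2) := by
      have h0 : (0:ℝ) ≤ (1 - ρ₃) * (c ^ 2 + d ^ 2) + ρ₃ * (c + d) ^ 2 := by
        have := mul_nonneg (by linarith : (0:ℝ) ≤ 1 - ρ₃)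
          (by positivity : (0:ℝ) ≤ c ^ 2 + d ^ 2)
        have := mul_nonneg h3 (sq_nonneg (c + d))
        linarith
      exact mul_nonneg (by linarith) h0
    simp [Finsupp.sum_fintype, dotProduct, Matrix.mulVec, Fin.sum_univ_four, Matrix.cons_val_zero,
      Matrix.cons_val_one, Matrix.head_cons, Matrix.cons_val_two, Matrix.tail_cons,
      Matrix.cons_val_three]
    nlinarith [e1, e2]
end

section
/- For the Khoudraji copula C(u,v) = u^{1−κ} C_ρ(u^κ, v) with C_ρ a bivariate copula and κ ∈ (0,1), C is itself a copula: it has uniform margins (C(u,1) = u and C(1,v) = v) and is 2-increasing. -/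
open Set

/-- For any bivariate copula `C_ρ` and `κ ∈ (0,1)`, the Khoudraji
transform `C(u,v) = u^{1−κ} C_ρ(u^κ, v)` is itself a copula: it is grounded, has uniform
margins, and is 2-increasing. -/
theorem statement15
    (Cρ : ℝ → ℝ → ℝ) (κ : ℝ) (hκ : κ ∈ Ioo (0:ℝ) 1)
    -- C_ρ is a bivariate copula
    (hground : ∀ u ∈ Icc (0:ℝ) 1, Cρ u 0 = 0 ∧ Cρ 0 u = 0)
    (hmarg : ∀ u ∈ Icc (0:ℝ) 1, Cρ u 1 = u ∧ Cρ 1 u = u)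
    (hincr : ∀ u u' v v' : ℝ, u ∈ Icc (0:ℝ) 1 → u' ∈ Icc (0:ℝ) 1 →
      v ∈ Icc (0:ℝ) 1 → v' ∈ Icc (0:ℝ) 1 → u ≤ u' → v ≤ v' →
      0 ≤ Cρ u' v' - Cρ u' v - Cρ u v' + Cρ u v)
    (C : ℝ → ℝ → ℝ)
    (hC : ∀ u ∈ Icc (0:ℝ) 1, ∀ v ∈ Icc (0:ℝ) 1,
      C u v = u ^ (1 - κ) * Cρ (u ^ κ) v) :
    (∀ u ∈ Icc (0:ℝ) 1, C u 0 = 0 ∧ C 0 u = 0)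
    ∧ (∀ u ∈ Icc (0:ℝ) 1, C u 1 = u ∧ C 1 u = u)
    ∧ (∀ u u' v v' : ℝ, u ∈ Icc (0:ℝ) 1 → u' ∈ Icc (0:ℝ) 1 →
        v ∈ Icc (0:ℝ) 1 → v' ∈ Icc (0:ℝ) 1 → u ≤ u' → v ≤ v' →
        0 ≤ C u' v' - C u' v - C u v' + C u v) := by
  obtain ⟨hκ0, hκ1⟩ := hκ
  have h01 : (0:ℝ) ∈ Icc (0:ℝ) 1 := by constructor <;> norm_num
  have h11 : (1:ℝ) ∈ Icc (0:ℝ) 1 := by constructor <;> norm_num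
  have hpow : ∀ u ∈ Icc (0:ℝ) 1, u ^ κ ∈ Icc (0:ℝ) 1 := by
    rintro u ⟨hu0, hu1⟩
    exact ⟨Real.rpow_nonneg hu0 κ, Real.rpow_le_one hu0 hu1 hκ0.le⟩
  refine ⟨?_, ?_, ?_⟩
  · rintro u hu
    constructor
    · rw [hC u hu 0 h01, (hground _ (hpow u hu)).1, mul_zero]
    · rw [hC 0 h01 u hu, Real.zero_rpow (by linarith), zero_mul]
  · rintro u hu
    constructor
    · rw [hC u hu 1 h11, (hmarg _ (hpow u hu)).1,
        ← Real.rpow_add_of_nonneg hu.1 (by linarith) hκ0.le]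
      simp
    · rw [hC 1 h11 u hu, Real.one_rpow, Real.one_rpow, one_mul, (hmarg u hu).2]
  · intro u u' v v' hu hu' hv hv' huu hvv
    rw [hC u hu v hv, hC u hu v' hv', hC u' hu' v hv, hC u' hu' v' hv']
    have ha0 : 0 ≤ u ^ (1-κ) := Real.rpow_nonneg hu.1 _
    have hb0 : 0 ≤ u' ^ (1-κ) := Real.rpow_nonneg hu'.1 _
    have hab : u ^ (1-κ) ≤ u' ^ (1-κ) := Real.rpow_le_rpow hu.1 huu (by linarith)
    have hx : u ^ κ ≤ u' ^ κ := Real.rpow_le_rpow hu.1 huu hκ0.le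
    have hd0 : 0 ≤ Cρ (u ^ κ) v' - Cρ (u ^ κ) v := by
      have h := hincr 0 (u ^ κ) v v' h01 (hpow u hu) hv hv' (hpow u hu).1 hvv
      rw [(hground v' hv').2, (hground v hv).2] at h
      linarith
    have hdd : Cρ (u ^ κ) v' - Cρ (u ^ κ) v ≤ Cρ (u' ^ κ) v' - Cρ (u' ^ κ) v := by
      have h := hincr (u ^ κ) (u' ^ κ) v v' (hpow u hu) (hpow u' hu') hv hv' hx hvv
      linarith
    nlinarith [mul_le_mul_of_nonneg_left hdd hb0,
      mul_le_mul_of_nonneg_right hab hd0]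
end

section
/- If the residual copula C3 is the independence copula (c3 ≡ 1), then under the 2-exchangeable copula model the conditional expectation of Y_n given x_n and (x_1,y_1),...,(x_{n-1},y_{n-1}) equals the unconditional copula regression ∫_0^1 G^{-1}(C_{2|1}^{-1}(w | F(x_n))) dw, independent of the other observations in the cluster. -/
open MeasureTheory Set

/-- If the residual copula is the independence copula (`c3 ≡ 1`), then
under the 2-exchangeable copula model the conditional expectation of `Y_n` given `x_n`
and the other cluster observations `(x_1,y_1),...,(x_{n-1},y_{n-1})` (with residual
pseudo-observations `wprev`) equals the unconditional copula regression
`∫₀¹ G⁻¹(C_{2|1}⁻¹(w | F(x_n))) dw`, independently of the other observations. -/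
theorem statement19
    (n : ℕ)
    (c3 : (Fin (n + 1) → ℝ) → ℝ) (hc3 : ∀ w, c3 w = 1)
    (c3marg : (Fin n → ℝ) → ℝ) (hc3marg : ∀ w, c3marg w = 1)
    (F G Ginv g : ℝ → ℝ) (c2 C21 C21inv : ℝ → ℝ → ℝ) (xn : ℝ)
    -- G is a continuous strictly increasing cdf with density g and inverse Ginv
    (hGmono : StrictMono G) (hGrange : ∀ y, G y ∈ Ioo (0:ℝ) 1)
    (hGderiv : ∀ y, HasDerivAt G (g y) y) (hgpos : ∀ y, 0 ≤ g y)
    (hGinv : ∀ y, Ginv (G y) = y) (hGsurj : ∀ p ∈ Ioo (0:ℝ) 1, G (Ginv p) = p)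
    -- C21 u = C_{2|1}(·|u) is strictly increasing with derivative c2 u and
    -- inverse C21inv · u
    (hC21mono : StrictMonoOn (C21 (F xn)) (Ioo (0:ℝ) 1))
    (hC21bij : C21 (F xn) '' Ioo (0:ℝ) 1 = Ioo (0:ℝ) 1)
    (hC21deriv : ∀ v ∈ Ioo (0:ℝ) 1,
      HasDerivAt (fun v' => C21 (F xn) v') (c2 (F xn) v) v)
    (hC21inv : ∀ v ∈ Ioo (0:ℝ) 1, C21inv (C21 (F xn) v) (F xn) = v)
    (hC21inv' : ∀ w ∈ Ioo (0:ℝ) 1, C21 (F xn) (C21inv w (F xn)) = w)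
    (hint : Integrable (fun y => y * (g y * c2 (F xn) (G y))) volume)
    (wprev : Fin n → ℝ) :
    ∫ y, y * (g y * c2 (F xn) (G y)
        * c3 (Fin.snoc wprev (C21 (F xn) (G y)) : Fin (n + 1) → ℝ) / c3marg wprev)
      = ∫ w in Ioo (0:ℝ) 1, Ginv (C21inv w (F xn)) := by
  -- c2 is nonnegative on Ioo 0 1 (derivative of a monotone function)
  have hc2nonneg : ∀ v ∈ Ioo (0:ℝ) 1, 0 ≤ c2 (F xn) v := by
    intro v hv
    have hd : HasDerivWithinAt (fun v' => C21 (F xn) v') (c2 (F xn) v) (Ioi v) v :=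
      (hC21deriv v hv).hasDerivWithinAt
    have hslope : Filter.Tendsto (slope (C21 (F xn)) v) (nhdsWithin v (Ioi v))
        (nhds (c2 (F xn) v)) := by
      have := hasDerivWithinAt_iff_tendsto_slope.mp hd
      rwa [Set.diff_singleton_eq_self (by simp : v ∉ Ioi v)] at this
    refine ge_of_tendsto hslope ?_
    have hmem : Ioo (0:ℝ) 1 ∈ nhdsWithin v (Ioi v) :=
      nhdsWithin_le_nhds (isOpen_Ioo.mem_nhds hv)
    filter_upwards [hmem, self_mem_nhdsWithin] with y hy hy'
    have hvy : v < y := hy'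
    have : C21 (F xn) v ≤ C21 (F xn) y := (hC21mono hv hy hvy).le
    have hpos : 0 < y - v := by linarith
    rw [slope_def_field]
    exact div_nonneg (by linarith) hpos.le
  -- the change-of-variables map
  set f : ℝ → ℝ := fun y => C21 (F xn) (G y) with hf
  have himg : f '' univ = Ioo (0:ℝ) 1 := by
    apply Subset.antisymm
    · rintro w ⟨y, -, rfl⟩
      rw [← hC21bij]
      exact mem_image_of_mem _ (hGrange y)
    · intro w hw
      rw [← hC21bij] at hw
      obtain ⟨v, hv, hvw⟩ := hw
      exact ⟨Ginv v, mem_univ _, by simp [hf, hGsurj v hv, hvw]⟩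
  have hinj : InjOn f univ := by
    intro y1 _ y2 _ h
    by_contra hne
    rcases lt_or_gt_of_ne hne with hlt | hlt
    · exact absurd h (ne_of_lt (hC21mono (hGrange y1) (hGrange y2) (hGmono hlt)))
    · exact absurd h.symm (ne_of_lt (hC21mono (hGrange y2) (hGrange y1) (hGmono hlt)))
  have hderiv : ∀ y ∈ (univ : Set ℝ),
      HasDerivWithinAt f (c2 (F xn) (G y) * g y) univ y := by
    intro y _
    exact ((hC21deriv (G y) (hGrange y)).comp y (hGderiv y)).hasDerivWithinAt
  have key := integral_image_eq_integral_abs_deriv_smul (f := f)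
      (f' := fun y => c2 (F xn) (G y) * g y) MeasurableSet.univ hderiv hinj
      (fun w => Ginv (C21inv w (F xn)))
  rw [himg] at key
  rw [key]
  rw [Measure.restrict_univ]
  apply integral_congr_ae
  filter_upwards with y
  have h1 : C21inv (f y) (F xn) = G y := hC21inv (G y) (hGrange y)
  have h2 : |c2 (F xn) (G y) * g y| = c2 (F xn) (G y) * g y :=
    abs_of_nonneg (mul_nonneg (hc2nonneg (G y) (hGrange y)) (hgpos y))
  simp only [smul_eq_mul, h2, h1, hGinv, hc3, hc3marg, mul_one, div_one]
  ring
end
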